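/- arXiv:1604.00057 — 2 statements merged into one kernel-verified Lean document; each statement's English description precedes it below -/
import Mathlib

section
/- Suppose u_n → u uniformly on [0,1], w is continuous on [0, ℓ], and s_n → s uniformly on [0,T] with δ ≤ s_n(T) ≤ ℓ for all n. If û_n(x) := u_n(x / s_n(T)) for 0 ≤ x ≤ s_n(T) and û(x) := u(x / s(T)) for 0 ≤ x ≤ s(T), then ∫₀^{s_n(T)} |û_n(x) − w(x)|² dx → ∫₀^{s(T)} |û(x) − w(x)|² dx as n → ∞. -/
open Set Filter Topology intervalIntegral
open scoped Interval

/-!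
Rescaling `x = y · s` turns `∫₀^{s} |u (x / s) − w x|² dx` into `s · ∫₀¹ |u y − w (y s)|² dy`,
which moves the varying endpoint into the integrand. On `[0,1]` the integrands then converge
pointwise (uniform convergence of `u_n`, continuity of `w`, `s_n T → s T`) and are eventually
bounded by a constant, so dominated convergence applies.
-/

theorem mul_mem_Icc_zero_of_mem_unitInterval {y c ℓ : ℝ} (hy : y ∈ Icc 0 1) (hc : c ∈ Icc 0 ℓ) :
    y * c ∈ Icc 0 ℓ :=
  ⟨mul_nonneg hy.1 hc.1, (mul_le_of_le_one_left hc.1 hy.2).trans hc.2⟩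

theorem integral_zero_eq_smul_integral_unitInterval {E : Type*} [NormedAddCommGroup E]
    [NormedSpace ℝ E] (f : ℝ → ℝ → E) {a : ℝ} (ha : a ≠ 0) :
    ∫ x in (0 : ℝ)..a, f (x / a) x = a • ∫ y in (0 : ℝ)..1, f y (y * a) := by
  simpa [mul_div_cancel_right₀ _ ha] using
    (smul_integral_comp_mul_right (fun x => f (x / a) x) a (a := 0) (b := 1)).symm

theorem tendsto_integral_unitInterval_sq_abs_sub_comp_mul {u : ℕ → ℝ → ℝ} {v w : ℝ → ℝ}
    {c : ℕ → ℝ} {c₀ ℓ : ℝ} (hu : ∀ n, ContinuousOn (u n) (Icc 0 1))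
    (hv : ContinuousOn v (Icc 0 1)) (huv : TendstoUniformlyOn u v atTop (Icc 0 1))
    (hw : ContinuousOn w (Icc 0 ℓ)) (hc : Tendsto c atTop (𝓝 c₀)) (hcℓ : ∀ n, c n ∈ Icc 0 ℓ) :
    Tendsto (fun n => ∫ y in (0 : ℝ)..1, |u n y - w (y * c n)| ^ 2) atTop
      (𝓝 (∫ y in (0 : ℝ)..1, |v y - w (y * c₀)| ^ 2)) := by
  obtain ⟨M, hM⟩ := isCompact_Icc.exists_bound_of_continuousOn hv
  obtain ⟨W, hW⟩ := isCompact_Icc.exists_bound_of_continuousOn hw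
  have hu_bdd : ∀ᶠ n in atTop, ∀ y ∈ Icc (0 : ℝ) 1, ‖u n y‖ ≤ M + 1 :=
    (uniformContinuous_norm.comp_tendstoUniformlyOn huv).eventually_forall_le (lt_add_one M) hM
  have hc₀ : c₀ ∈ Icc 0 ℓ := isClosed_Icc.mem_of_tendsto hc (.of_forall hcℓ)
  have hΙ : Ι (0 : ℝ) 1 ⊆ Icc 0 1 := by
    rw [uIoc_of_le zero_le_one]
    exact Ioc_subset_Icc_self
  refine tendsto_integral_filter_of_dominated_convergence (fun _ => (M + 1 + W) ^ 2)
    (.of_forall fun n => ?_) ?_ intervalIntegrable_const (.of_forall fun y hy => ?_)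
  · have hw_n : ContinuousOn (fun y => w (y * c n)) (Icc 0 1) :=
      hw.comp (continuousOn_id.mul continuousOn_const)
        fun y hy => mul_mem_Icc_zero_of_mem_unitInterval hy (hcℓ n)
    exact (((hu n).sub hw_n).abs.pow 2).mono hΙ |>.aestronglyMeasurable measurableSet_uIoc
  · filter_upwards [hu_bdd] with n hn
    refine .of_forall fun y hy => ?_
    have hy := hΙ hy
    have h_abs : |u n y - w (y * c n)| ≤ M + 1 + W :=
      (abs_sub _ _).trans
        (add_le_add (hn y hy) (hW _ (mul_mem_Icc_zero_of_mem_unitInterval hy (hcℓ n))))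
    rw [Real.norm_eq_abs, abs_pow, abs_abs]
    gcongr
  · have hy := hΙ hy
    have hw_lim : Tendsto (fun n => w (y * c n)) atTop (𝓝 (w (y * c₀))) :=
      (hw.continuousWithinAt (mul_mem_Icc_zero_of_mem_unitInterval hy hc₀)).tendsto.comp
        (tendsto_nhdsWithin_iff.2 ⟨tendsto_const_nhds.mul hc,
          .of_forall fun n => mul_mem_Icc_zero_of_mem_unitInterval hy (hcℓ n)⟩)
    exact ((huv.tendsto_at hy).sub hw_lim).abs.pow 2

theorem stmt5_general
    (T δ ℓ : ℝ) (hT : 0 < T) (hδ : 0 < δ)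
    (u : ℕ → ℝ → ℝ) (ulim : ℝ → ℝ)
    (hu : ∀ n, ContinuousOn (u n) (Icc 0 1)) (hul : ContinuousOn ulim (Icc 0 1))
    (huconv : TendstoUniformlyOn u ulim atTop (Icc 0 1))
    (w : ℝ → ℝ) (hw : ContinuousOn w (Icc 0 ℓ))
    (s : ℕ → ℝ → ℝ) (slim : ℝ → ℝ)
    (hsconv : TendstoUniformlyOn s slim atTop (Icc 0 T))
    (hsb : ∀ n, δ ≤ s n T ∧ s n T ≤ ℓ) :
    Tendsto (fun n => ∫ x in (0 : ℝ)..(s n T), |u n (x / s n T) - w x| ^ 2)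
      atTop (𝓝 (∫ x in (0 : ℝ)..(slim T), |ulim (x / slim T) - w x| ^ 2)) := by
  have hsT : Tendsto (fun n => s n T) atTop (𝓝 (slim T)) := hsconv.tendsto_at ⟨hT.le, le_rfl⟩
  have hslim : δ ≤ slim T := ge_of_tendsto' hsT fun n => (hsb n).1
  have hs_mem : ∀ n, s n T ∈ Icc 0 ℓ := fun n => ⟨hδ.le.trans (hsb n).1, (hsb n).2⟩
  rw [integral_zero_eq_smul_integral_unitInterval (fun y x => |ulim y - w x| ^ 2)
    (hδ.trans_le hslim).ne']
  refine (hsT.smul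
    (tendsto_integral_unitInterval_sq_abs_sub_comp_mul hu hul huconv hw hsT hs_mem)).congr fun n => ?_
  exact (integral_zero_eq_smul_integral_unitInterval (fun y x => |u n y - w x| ^ 2)
    (hδ.trans_le (hsb n).1).ne').symm

/-- Convergence of the final-time cost term along a minimizing sequence: if `u_n → u`
uniformly on `[0,1]`, `w` is continuous on `[0,ℓ]`, `s_n → s` uniformly on `[0,T]` with
`δ ≤ s_n T ≤ ℓ`, then
`∫₀^{s_n T} |u_n (x / s_n T) − w x|² dx → ∫₀^{s T} |u (x / s T) − w x|² dx`. -/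
theorem stmt5
    (T δ ℓ : ℝ) (hT : 0 < T) (hδ : 0 < δ) (hδℓ : δ ≤ ℓ)
    (u : ℕ → ℝ → ℝ) (ulim : ℝ → ℝ)
    (hu : ∀ n, ContinuousOn (u n) (Icc 0 1)) (hul : ContinuousOn ulim (Icc 0 1))
    (huconv : TendstoUniformlyOn u ulim atTop (Icc 0 1))
    (w : ℝ → ℝ) (hw : ContinuousOn w (Icc 0 ℓ))
    (s : ℕ → ℝ → ℝ) (slim : ℝ → ℝ)
    (hsconv : TendstoUniformlyOn s slim atTop (Icc 0 T))
    (hsb : ∀ n, δ ≤ s n T ∧ s n T ≤ ℓ) :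
    Tendsto (fun n => ∫ x in (0 : ℝ)..(s n T), |u n (x / s n T) - w x| ^ 2)
      atTop (𝓝 (∫ x in (0 : ℝ)..(slim T), |ulim (x / slim T) - w x| ^ 2)) :=
  stmt5_general T δ ℓ hT hδ u ulim hu hul huconv w hw s slim hsconv hsb
end

section
/- If v : [0,1] → ℝ is Hölder continuous with exponent 1/2 (constant L), w ∈ C[0,1], and s_n → s in ℝ with s_n, s ∈ [δ, ℓ] ⊆ (0, ∞), then t_n := ∫₀^{s_n} |v(x/s_n) − w(x)|² dx converges to ∫₀^{s} |v(x/s) − w(x)|² dx, with |t_n − t| ≤ C(L, ‖v‖_∞, ‖w‖_∞, δ, ℓ) · |s_n − s|^{1/2}. -/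
open Set Filter Topology intervalIntegral

open MeasureTheory

/-!
For `δ ≤ b ≤ a` write `f_c x = |v (x / c) - w x| ^ 2` and split
`∫₀^a f_a - ∫₀^b f_b = ∫₀^b (f_a - f_b) + ∫_b^a f_a`.
On `[0, b]` the rescaled points `x / a` and `x / b` are at most `(a - b) / δ` apart, so
`|p² - q²| ≤ 2M |p - q|` and the Hölder bound on `v` make the first integral `O((a - b) ^ r)`;
the second is at most `M² (a - b) ≤ M² ℓ ^ (1 - r) (a - b) ^ r`.
-/

theorem tendsto_mul_abs_sub_rpow_nhds_zero (L : ℝ) {r : ℝ} (hr : 0 < r) (x : ℝ) :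
    Tendsto (fun y => L * |y - x| ^ r) (𝓝 x) (𝓝 0) := by
  have hcont : Continuous fun y => L * |y - x| ^ r :=
    ((continuous_id.sub continuous_const).abs.rpow_const fun _ => Or.inr hr.le).const_mul L
  simpa [hr.ne'] using hcont.tendsto x

theorem continuousOn_of_abs_sub_le_mul_rpow {S : Set ℝ} {v : ℝ → ℝ} {L r : ℝ} (hr : 0 < r)
    (hv : ∀ x ∈ S, ∀ y ∈ S, |v x - v y| ≤ L * |x - y| ^ r) : ContinuousOn v S := by
  intro x hx
  rw [ContinuousWithinAt, tendsto_iff_norm_sub_tendsto_zero]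
  refine squeeze_zero_norm' (eventually_nhdsWithin_of_forall fun y hy => ?_)
    ((tendsto_mul_abs_sub_rpow_nhds_zero L hr x).mono_left nhdsWithin_le_nhds)
  simpa only [Real.norm_eq_abs, abs_abs] using hv y hy x hx

theorem abs_sq_sub_sq_le_of_abs_le {p q M : ℝ} (hp : |p| ≤ M) (hq : |q| ≤ M) :
    |p ^ 2 - q ^ 2| ≤ 2 * M * |p - q| := by
  rw [sq_sub_sq, abs_mul]
  gcongr
  linarith [abs_add_le p q]

theorem abs_div_sub_div_le {x a b : ℝ} (hb : 0 < b) (hba : b ≤ a) (hx : 0 ≤ x) (hxb : x ≤ b) :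
    |x / a - x / b| ≤ (a - b) / a := by
  have ha : 0 < a := hb.trans_le hba
  rw [abs_sub_comm, abs_of_nonneg (sub_nonneg.2 (div_le_div_of_nonneg_left hx hb hba)),
    div_sub_div _ _ hb.ne' ha.ne', div_le_div_iff₀ (by positivity) ha]
  nlinarith [mul_le_mul_of_nonneg_right hxb (sub_nonneg.2 hba)]

theorem abs_integral_sub_integral_le {f g : ℝ → ℝ} {a b K₁ K₂ : ℝ} (hb : 0 ≤ b) (hba : b ≤ a)
    (hf : IntervalIntegrable f volume 0 a) (hg : IntervalIntegrable g volume 0 b)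
    (hfg : ∀ x ∈ Ioc 0 b, |f x - g x| ≤ K₁) (hf_le : ∀ x ∈ Ioc b a, |f x| ≤ K₂) :
    |(∫ x in 0..a, f x) - ∫ x in 0..b, g x| ≤ K₁ * b + K₂ * (a - b) := by
  have hf₁ : IntervalIntegrable f volume 0 b := hf.mono_set <| by
    rw [uIcc_of_le hb, uIcc_of_le (hb.trans hba)]; exact Icc_subset_Icc_right hba
  have hf₂ : IntervalIntegrable f volume b a := hf.mono_set <| by
    rw [uIcc_of_le hba, uIcc_of_le (hb.trans hba)]; exact Icc_subset_Icc_left hb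
  have h₁ : ‖∫ x in 0..b, f x - g x‖ ≤ K₁ * |b - 0| :=
    norm_integral_le_of_norm_le_const fun x hx => hfg x (by rwa [uIoc_of_le hb] at hx)
  have h₂ : ‖∫ x in b..a, f x‖ ≤ K₂ * |a - b| :=
    norm_integral_le_of_norm_le_const fun x hx => hf_le x (by rwa [uIoc_of_le hba] at hx)
  rw [Real.norm_eq_abs, sub_zero, abs_of_nonneg hb] at h₁
  rw [Real.norm_eq_abs, abs_of_nonneg (sub_nonneg.2 hba)] at h₂
  rw [← integral_add_adjacent_intervals hf₁ hf₂, add_sub_right_comm, ← integral_sub hf₁ hg]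
  exact (abs_add_le _ _).trans (add_le_add h₁ h₂)

noncomputable def rescaledSqDist (v w : ℝ → ℝ) (s : ℝ) : ℝ :=
  ∫ x in 0..s, |v (x / s) - w x| ^ 2

section

variable {v w : ℝ → ℝ} {δ ℓ L r Mv Mw : ℝ}

theorem intervalIntegrable_rescaledSqDist {s : ℝ} (hv : ContinuousOn v (Icc 0 1))
    (hw : ContinuousOn w (Icc 0 ℓ)) (hs : 0 < s) (hsℓ : s ≤ ℓ) :
    IntervalIntegrable (fun x => |v (x / s) - w x| ^ 2) volume 0 s := by
  refine ContinuousOn.intervalIntegrable ?_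
  rw [uIcc_of_le hs.le]
  have hmaps : MapsTo (· / s) (Icc 0 s) (Icc 0 1) := fun x hx =>
    ⟨div_nonneg hx.1 hs.le, (div_le_one hs).2 hx.2⟩
  exact (((hv.comp (continuousOn_id.div_const s) hmaps).sub
    (hw.mono (Icc_subset_Icc_right hsℓ))).abs).pow 2

theorem abs_sq_rescaled_sub_le (hL : 0 ≤ L) (hr : 0 ≤ r)
    (hvH : ∀ x ∈ Icc (0 : ℝ) 1, ∀ y ∈ Icc (0 : ℝ) 1, |v x - v y| ≤ L * |x - y| ^ r)
    (hvb : ∀ x ∈ Icc (0 : ℝ) 1, |v x| ≤ Mv) (hwb : ∀ x ∈ Icc 0 ℓ, |w x| ≤ Mw)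
    {a b x : ℝ} (hb : 0 < b) (hba : b ≤ a) (haℓ : a ≤ ℓ) (hx : x ∈ Icc 0 b) :
    |(|v (x / a) - w x| ^ 2) - |v (x / b) - w x| ^ 2|
      ≤ 2 * (Mv + Mw) * L * ((a - b) / a) ^ r := by
  have ha : 0 < a := hb.trans_le hba
  have hxa : x / a ∈ Icc (0 : ℝ) 1 := ⟨div_nonneg hx.1 ha.le, (div_le_one ha).2 (hx.2.trans hba)⟩
  have hxb : x / b ∈ Icc (0 : ℝ) 1 := ⟨div_nonneg hx.1 hb.le, (div_le_one hb).2 hx.2⟩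
  have hxℓ : x ∈ Icc 0 ℓ := ⟨hx.1, hx.2.trans (hba.trans haℓ)⟩
  have hbound : ∀ y ∈ Icc (0 : ℝ) 1, |v y - w x| ≤ Mv + Mw := fun y hy =>
    (abs_sub _ _).trans (add_le_add (hvb y hy) (hwb x hxℓ))
  rw [sq_abs, sq_abs, mul_assoc]
  calc _ ≤ 2 * (Mv + Mw) * |v (x / a) - w x - (v (x / b) - w x)| :=
        abs_sq_sub_sq_le_of_abs_le (hbound _ hxa) (hbound _ hxb)
    _ ≤ 2 * (Mv + Mw) * (L * ((a - b) / a) ^ r) := by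
        have hM : 0 ≤ Mv + Mw := (abs_nonneg _).trans (hbound _ hxa)
        rw [sub_sub_sub_cancel_right]
        gcongr
        exact (hvH _ hxa _ hxb).trans (by gcongr; exact abs_div_sub_div_le hb hba hx.1 hx.2)

theorem abs_rescaledSqDist_sub_le_of_le (hδ : 0 < δ) (hL : 0 ≤ L) (hr₀ : 0 < r) (hr₁ : r ≤ 1)
    (hvH : ∀ x ∈ Icc (0 : ℝ) 1, ∀ y ∈ Icc (0 : ℝ) 1, |v x - v y| ≤ L * |x - y| ^ r)
    (hvb : ∀ x ∈ Icc (0 : ℝ) 1, |v x| ≤ Mv)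
    (hw : ContinuousOn w (Icc 0 ℓ)) (hwb : ∀ x ∈ Icc 0 ℓ, |w x| ≤ Mw)
    {a b : ℝ} (hb : δ ≤ b) (hba : b ≤ a) (haℓ : a ≤ ℓ) :
    |rescaledSqDist v w a - rescaledSqDist v w b|
      ≤ (2 * (Mv + Mw) * L * ℓ / δ ^ r + (Mv + Mw) ^ 2 * ℓ ^ (1 - r)) * (a - b) ^ r := by
  have hb₀ : 0 < b := hδ.trans_le hb
  have hab : 0 ≤ a - b := sub_nonneg.2 hba
  have hv := continuousOn_of_abs_sub_le_mul_rpow hr₀ hvH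
  have hM : 0 ≤ Mv + Mw := add_nonneg ((abs_nonneg _).trans (hvb 0 (left_mem_Icc.2 zero_le_one)))
    ((abs_nonneg _).trans (hwb 0 (left_mem_Icc.2 (hb₀.le.trans (hba.trans haℓ)))))
  have hdiff : ∀ x ∈ Ioc 0 b, |(|v (x / a) - w x| ^ 2) - |v (x / b) - w x| ^ 2|
      ≤ 2 * (Mv + Mw) * L * (a - b) ^ r / δ ^ r := fun x hx => by
    refine (abs_sq_rescaled_sub_le hL hr₀.le hvH hvb hwb hb₀ hba haℓ
      (Ioc_subset_Icc_self hx)).trans ?_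
    rw [mul_div_assoc, ← Real.div_rpow hab hδ.le]
    gcongr
    exacts [div_nonneg hab (hb₀.le.trans hba), hb.trans hba]
  have htail : ∀ x ∈ Ioc b a, |(|v (x / a) - w x| ^ 2)| ≤ (Mv + Mw) ^ 2 := fun x hx => by
    have hx₀ : 0 ≤ x := hb₀.le.trans hx.1.le
    rw [abs_of_nonneg (by positivity)]
    gcongr
    exact (abs_sub _ _).trans (add_le_add
      (hvb _ ⟨div_nonneg hx₀ (hb₀.trans_le hba).le, (div_le_one (hb₀.trans_le hba)).2 hx.2⟩)
      (hwb x ⟨hx₀, hx.2.trans haℓ⟩))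
  have hlen : a - b ≤ ℓ ^ (1 - r) * (a - b) ^ r := by
    calc a - b = (a - b) ^ (1 - r) * (a - b) ^ r := by
          rw [← Real.rpow_add' hab (by norm_num), sub_add_cancel, Real.rpow_one]
      _ ≤ ℓ ^ (1 - r) * (a - b) ^ r := by
          gcongr
          linarith
  calc _ ≤ 2 * (Mv + Mw) * L * (a - b) ^ r / δ ^ r * b + (Mv + Mw) ^ 2 * (a - b) :=
        abs_integral_sub_integral_le hb₀.le hba
          (intervalIntegrable_rescaledSqDist hv hw (hb₀.trans_le hba) haℓ)
          (intervalIntegrable_rescaledSqDist hv hw hb₀ (hba.trans haℓ)) hdiff htail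
    _ ≤ 2 * (Mv + Mw) * L * (a - b) ^ r / δ ^ r * ℓ
          + (Mv + Mw) ^ 2 * (ℓ ^ (1 - r) * (a - b) ^ r) := by
        gcongr
        exact hba.trans haℓ
    _ = _ := by ring

theorem exists_abs_rescaledSqDist_sub_le (hδ : 0 < δ) (hL : 0 ≤ L) (hr₀ : 0 < r) (hr₁ : r ≤ 1)
    (hvH : ∀ x ∈ Icc (0 : ℝ) 1, ∀ y ∈ Icc (0 : ℝ) 1, |v x - v y| ≤ L * |x - y| ^ r)
    (hvb : ∀ x ∈ Icc (0 : ℝ) 1, |v x| ≤ Mv)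
    (hw : ContinuousOn w (Icc 0 ℓ)) (hwb : ∀ x ∈ Icc 0 ℓ, |w x| ≤ Mw) :
    ∃ C > 0, ∀ a ∈ Icc δ ℓ, ∀ b ∈ Icc δ ℓ,
      |rescaledSqDist v w a - rescaledSqDist v w b| ≤ C * |a - b| ^ r := by
  refine ⟨max (2 * (Mv + Mw) * L * ℓ / δ ^ r + (Mv + Mw) ^ 2 * ℓ ^ (1 - r)) 1,
    lt_max_of_lt_right one_pos, fun a ha b hb => ?_⟩
  wlog hba : b ≤ a generalizing a b
  · simpa only [abs_sub_comm] using this b hb a ha (le_of_not_ge hba)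
  rw [abs_of_nonneg (sub_nonneg.2 hba)]
  refine (abs_rescaledSqDist_sub_le_of_le hδ hL hr₀ hr₁ hvH hvb hw hwb hb.1 hba ha.2).trans ?_
  gcongr
  exact le_max_left _ _

end

theorem stmt11_general
    (δ ℓ L Mv Mw : ℝ) (hδ : 0 < δ) (hL : 0 ≤ L)
    (v w : ℝ → ℝ)
    (hvH : ∀ x ∈ Icc (0 : ℝ) 1, ∀ y ∈ Icc (0 : ℝ) 1,
        |v x - v y| ≤ L * |x - y| ^ ((1 : ℝ) / 2))
    (hvb : ∀ x ∈ Icc (0 : ℝ) 1, |v x| ≤ Mv)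
    (hw : ContinuousOn w (Icc 0 ℓ)) (hwb : ∀ x ∈ Icc (0 : ℝ) ℓ, |w x| ≤ Mw)
    (sn : ℕ → ℝ) (s : ℝ)
    (hsn : ∀ n, sn n ∈ Icc δ ℓ) (hs : s ∈ Icc δ ℓ)
    (hconv : Tendsto sn atTop (𝓝 s)) :
    ∃ C > (0 : ℝ),
      (∀ n, |(∫ x in (0 : ℝ)..(sn n), |v (x / sn n) - w x| ^ 2)
              - ∫ x in (0 : ℝ)..s, |v (x / s) - w x| ^ 2|
          ≤ C * |sn n - s| ^ ((1 : ℝ) / 2)) ∧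
      Tendsto (fun n => ∫ x in (0 : ℝ)..(sn n), |v (x / sn n) - w x| ^ 2)
        atTop (𝓝 (∫ x in (0 : ℝ)..s, |v (x / s) - w x| ^ 2)) := by
  obtain ⟨C, hC, hHolder⟩ :=
    exists_abs_rescaledSqDist_sub_le hδ hL (by norm_num) (by norm_num) hvH hvb hw hwb
  have hbound : ∀ n, |rescaledSqDist v w (sn n) - rescaledSqDist v w s|
      ≤ C * |sn n - s| ^ ((1 : ℝ) / 2) := fun n => hHolder _ (hsn n) _ hs
  refine ⟨C, hC, hbound, ?_⟩
  rw [tendsto_iff_norm_sub_tendsto_zero]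
  refine squeeze_zero_norm (fun n => ?_)
    ((tendsto_mul_abs_sub_rpow_nhds_zero C (r := 1 / 2) (by norm_num) s).comp hconv)
  rw [norm_norm]
  exact hbound n

/-- Quantitative continuity of `s ↦ ∫₀^s |v(x/s) − w x|² dx`: for `v` Hölder-`1/2`
with constant `L` on `[0,1]`, `w` continuous and bounded on `[0,ℓ]`, `s_n, s ∈ [δ,ℓ]`,
there is `C = C(L, ‖v‖_∞, ‖w‖_∞, δ, ℓ)` with
`|t_n − t| ≤ C |s_n − s|^{1/2}`; in particular `t_n → t` when `s_n → s`. -/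
theorem stmt11
    (δ ℓ L Mv Mw : ℝ) (hδ : 0 < δ) (hδℓ : δ ≤ ℓ) (hL : 0 ≤ L)
    (v w : ℝ → ℝ)
    (hvH : ∀ x ∈ Icc (0 : ℝ) 1, ∀ y ∈ Icc (0 : ℝ) 1,
        |v x - v y| ≤ L * |x - y| ^ ((1 : ℝ) / 2))
    (hvb : ∀ x ∈ Icc (0 : ℝ) 1, |v x| ≤ Mv)
    (hw : ContinuousOn w (Icc 0 ℓ)) (hwb : ∀ x ∈ Icc (0 : ℝ) ℓ, |w x| ≤ Mw)
    (sn : ℕ → ℝ) (s : ℝ)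
    (hsn : ∀ n, sn n ∈ Icc δ ℓ) (hs : s ∈ Icc δ ℓ)
    (hconv : Tendsto sn atTop (𝓝 s)) :
    ∃ C > (0 : ℝ),
      (∀ n, |(∫ x in (0 : ℝ)..(sn n), |v (x / sn n) - w x| ^ 2)
              - ∫ x in (0 : ℝ)..s, |v (x / s) - w x| ^ 2|
          ≤ C * |sn n - s| ^ ((1 : ℝ) / 2)) ∧
      Tendsto (fun n => ∫ x in (0 : ℝ)..(sn n), |v (x / sn n) - w x| ^ 2)
        atTop (𝓝 (∫ x in (0 : ℝ)..s, |v (x / s) - w x| ^ 2)) :=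
  stmt11_general δ ℓ L Mv Mw hδ hL v w hvH hvb hw hwb sn s hsn hs hconv
end
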